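/- arXiv:1005.3913 — 2 statements merged into one kernel-verified Lean document; each statement's English description precedes it below -/
import Mathlib

section
/- Conjecture 2 implies Conjecture 1 for λ > 1: fix n ≥ 2 and α > 1/2, and suppose that for every nonnegative increasing function h on [0,∞), the condition ∫₀¹ (h(tx)/x)(1-x)^{n-1} dx ≤ t^α for all t ≥ 0 implies ∫₀^∞ (h(t)/t) dt/(1+t^{2α}) ≤ (π/2) ∏_{k=1}^{n-1}(1+α/k). Then with λ = 2α, for every nonnegative increasing logarithmically convex S on [0,∞) with S(0)=0 (represented as S(x)=∫₀ˣ s(τ)/τ dτ with s increasing and nonnegative), the condition ∫₀¹ S(tx)(1-x²)^{n-2} x dx ≤ t^λ for all t ≥ 0 implies ∫₀^∞ S(t) t^{2λ-1}/(1+t^{2λ})² dt ≤ (π(n-1)/(2λ)) ∏_{k=1}^{n-1}(1+λ/(2k)). -/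
/-!
With `S x = ∫₀ˣ s τ / τ dτ`, Tonelli turns both the hypothesis and the left-hand side of the
conclusion into integrals of `s τ / τ` against explicit kernels:
`∫_{τ/t}^1 (1 - x²)^(n-2) x dx = (1 - (τ/t)²)^(n-1) / (2 (n-1))` and
`∫_τ^∞ t^(2λ-1) / (1 + t^(2λ))² dt = 1 / (2λ (1 + τ^(2λ)))`.
The substitutions `x = (τ/t)²` and `T = τ²` identify these with the two integrals of
Conjecture 2 for `h (x²) = s x / (4 (n-1))`, the second one up to the factor `λ / (n-1)`.
If `s τ / τ` is not integrable at `0`, the interval integrals defining `S` take the junk value `0`,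
so `S` vanishes on `(0, ∞)` and the conclusion is trivial.
-/

open Real MeasureTheory Finset Filter Topology
open scoped ENNReal

theorem setIntegral_Ioi_eq_comp_sq_div {c : ℝ} (hc : 0 < c) (g : ℝ → ℝ) :
    ∫ u in Set.Ioi 0, g u = ∫ τ in Set.Ioi 0, 2 * τ / c ^ 2 * g ((τ / c) ^ 2) := by
  have himage : (fun τ : ℝ => (τ / c) ^ 2) '' Set.Ioi 0 = Set.Ioi 0 := by
    ext u
    refine ⟨fun ⟨τ, hτ, hu⟩ => hu ▸ by simp only [Set.mem_Ioi] at hτ ⊢; positivity,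
      fun hu => ⟨c * √u, by simp only [Set.mem_Ioi] at hu ⊢; positivity, ?_⟩⟩
    simp only [mul_div_cancel_left₀ _ hc.ne', sq_sqrt (le_of_lt hu)]
  conv_lhs => rw [← himage]
  refine integral_image_eq_integral_deriv_smul_of_monotoneOn measurableSet_Ioi
    (fun τ _ => ?_) (fun x hx y _ hxy => ?_) g
  · refine (((hasDerivAt_id τ).div_const c).pow 2).hasDerivWithinAt.congr_deriv ?_
    norm_num [id]
    field_simp
  · have : 0 ≤ x / c := div_nonneg (le_of_lt hx) hc.le
    gcongr

theorem lintegral_Ioo_one_sub_sq_pow_mul (m : ℕ) {c : ℝ} (hc : 0 ≤ c) :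
    ∫⁻ x in Set.Ioo c 1, ENNReal.ofReal ((1 - x ^ 2) ^ m * x)
      = ENNReal.ofReal (max (1 - c ^ 2) 0 ^ (m + 1) / (2 * (m + 1))) := by
  rcases le_or_gt 1 c with hc1 | hc1
  · rw [Set.Ioo_eq_empty (not_lt.2 hc1), max_eq_right (by nlinarith)]
    simp
  have hderiv : ∀ x ∈ Set.uIcc c 1,
      HasDerivAt (fun x : ℝ => -(1 - x ^ 2) ^ (m + 1) / (2 * (m + 1))) ((1 - x ^ 2) ^ m * x) x := by
    intro x _
    refine ((((hasDerivAt_pow 2 x).const_sub 1).pow (m + 1)).neg.div_const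
      (2 * ((m : ℝ) + 1))).congr_deriv ?_
    push_cast
    field_simp
  have hint : IntervalIntegrable (fun x : ℝ => (1 - x ^ 2) ^ m * x) volume c 1 :=
    (by fun_prop : Continuous fun x : ℝ => (1 - x ^ 2) ^ m * x).intervalIntegrable c 1
  rw [← ofReal_integral_eq_lintegral_ofReal, ← integral_Ioc_eq_integral_Ioo,
    ← intervalIntegral.integral_of_le hc1.le,
    intervalIntegral.integral_eq_sub_of_hasDerivAt hderiv hint, max_eq_left (by nlinarith)]
  · congr 1
    ring
  · exact (intervalIntegrable_iff_integrableOn_Ioo_of_le hc1.le).1 hint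
  · filter_upwards [ae_restrict_mem measurableSet_Ioo] with x hx
    have : 0 ≤ 1 - x ^ 2 := by nlinarith [hx.1, hx.2]
    exact mul_nonneg (pow_nonneg this _) (hc.trans hx.1.le)

theorem lintegral_Ioi_rpow_div_one_add_rpow_sq {p τ : ℝ} (hp : 0 < p) (hτ : 0 < τ) :
    ∫⁻ x in Set.Ioi τ, ENNReal.ofReal (x ^ (p - 1) / (1 + x ^ p) ^ 2)
      = ENNReal.ofReal (1 / (p * (1 + τ ^ p))) := by
  have hderiv : ∀ x ∈ Set.Ici τ, HasDerivAt (fun x : ℝ => -(p * (1 + x ^ p))⁻¹)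
      (x ^ (p - 1) / (1 + x ^ p) ^ 2) x := by
    intro x hx
    have hx0 : 0 < x := hτ.trans_le hx
    have h1 := ((hasDerivAt_rpow_const (p := p) (Or.inl hx0.ne')).const_add 1).const_mul p
    refine (h1.inv (by positivity)).neg.congr_deriv ?_
    field_simp
  have hpos : ∀ x ∈ Set.Ioi τ, 0 ≤ x ^ (p - 1) / (1 + x ^ p) ^ 2 := fun x hx => by
    have : 0 < x := hτ.trans hx
    positivity
  have hlim : Tendsto (fun x : ℝ => -(p * (1 + x ^ p))⁻¹) atTop (𝓝 0) := by
    simpa using ((tendsto_atTop_add_const_left _ 1 (tendsto_rpow_atTop hp)).const_mul_atTop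
      hp).inv_tendsto_atTop.neg
  rw [← ofReal_integral_eq_lintegral_ofReal (integrableOn_Ioi_deriv_of_nonneg' hderiv hpos hlim)
    (ae_restrict_of_forall_mem measurableSet_Ioi hpos),
    integral_Ioi_of_hasDerivAt_of_nonneg' hderiv hpos hlim]
  congr 1
  ring

theorem lintegral_lintegral_Ioo_mul_swap {F K : ℝ → ℝ≥0∞}
    (hF : AEMeasurable F (volume.restrict (Set.Ioi 0))) (hK : Measurable K) {t : ℝ} (ht : 0 < t)
    (U : Set ℝ) :
    ∫⁻ x in U, (∫⁻ τ in Set.Ioo 0 (t * x), F τ) * K x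
      = ∫⁻ τ in Set.Ioi 0, F τ * ∫⁻ x in U ∩ Set.Ioi (τ / t), K x := by
  set G : ℝ → ℝ → ℝ≥0∞ := fun x τ =>
    {p : ℝ × ℝ | p.2 < t * p.1}.indicator (fun p => F p.2 * K p.1) (x, τ)
  have hG : AEMeasurable (Function.uncurry G)
      ((volume.restrict U).prod (volume.restrict (Set.Ioi 0))) :=
    ((hF.comp_quasiMeasurePreserving Measure.quasiMeasurePreserving_snd).mul
      (hK.comp measurable_fst).aemeasurable).indicator
      (measurableSet_lt measurable_snd (measurable_fst.const_mul t))
  calc ∫⁻ x in U, (∫⁻ τ in Set.Ioo 0 (t * x), F τ) * K x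
      = ∫⁻ x in U, ∫⁻ τ in Set.Ioi 0, G x τ := by
        refine lintegral_congr fun x => ?_
        rw [← lintegral_mul_const'' _
            (hF.mono_measure (Measure.restrict_mono Set.Ioo_subset_Ioi_self le_rfl)),
          ← Set.Iio_inter_Ioi, ← Measure.restrict_restrict measurableSet_Iio,
          ← lintegral_indicator measurableSet_Iio]
        rfl
    _ = ∫⁻ τ in Set.Ioi 0, ∫⁻ x in U, G x τ := lintegral_lintegral_swap hG
    _ = ∫⁻ τ in Set.Ioi 0, F τ * ∫⁻ x in U ∩ Set.Ioi (τ / t), K x := by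
        refine lintegral_congr fun τ => ?_
        rw [← lintegral_const_mul _ hK, Set.inter_comm,
          ← Measure.restrict_restrict measurableSet_Ioi, ← lintegral_indicator measurableSet_Ioi]
        congr 1 with x
        simp only [G, Set.indicator, Set.mem_ofPred_eq, Set.mem_Ioi, div_lt_iff₀ ht, mul_comm]

theorem setIntegral_comp_mul_mul_eq {S f k κ : ℝ → ℝ} {U : Set ℝ} {t : ℝ} (ht : 0 < t)
    (hU : MeasurableSet U) (hU0 : U ⊆ Set.Ioi 0) (hS : MonotoneOn S (Set.Ici 0))
    (hS0 : ∀ x ≥ 0, 0 ≤ S x) (hf : AEMeasurable f (volume.restrict (Set.Ioi 0)))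
    (hf0 : ∀ τ > 0, 0 ≤ f τ)
    (hSf : ∀ x > 0, ENNReal.ofReal (S x) = ∫⁻ τ in Set.Ioo 0 x, ENNReal.ofReal (f τ))
    (hk : Measurable k) (hk0 : ∀ x ∈ U, 0 ≤ k x) (hκ : Measurable κ) (hκ0 : ∀ τ > 0, 0 ≤ κ τ)
    (hkκ : ∀ τ > 0,
      ∫⁻ x in U ∩ Set.Ioi (τ / t), ENNReal.ofReal (k x) = ENNReal.ofReal (κ τ)) :
    ∫ x in U, S (t * x) * k x = ∫ τ in Set.Ioi 0, f τ * κ τ := by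
  have htx : ∀ x ∈ U, 0 < t * x := fun x hx => mul_pos ht (hU0 hx)
  have hSt : AEMeasurable (fun x => S (t * x)) (volume.restrict U) :=
    aemeasurable_restrict_of_monotoneOn hU fun x hx y hy hxy =>
      hS (htx x hx).le (htx y hy).le (mul_le_mul_of_nonneg_left hxy ht.le)
  rw [integral_eq_lintegral_of_nonneg_ae, integral_eq_lintegral_of_nonneg_ae]
  · congr 1
    calc ∫⁻ x in U, ENNReal.ofReal (S (t * x) * k x)
        = ∫⁻ x in U, (∫⁻ τ in Set.Ioo 0 (t * x), ENNReal.ofReal (f τ)) * ENNReal.ofReal (k x) :=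
          setLIntegral_congr_fun hU fun x hx => by
            rw [ENNReal.ofReal_mul (hS0 _ (htx x hx).le), hSf _ (htx x hx)]
      _ = ∫⁻ τ in Set.Ioi 0,
            ENNReal.ofReal (f τ) * ∫⁻ x in U ∩ Set.Ioi (τ / t), ENNReal.ofReal (k x) :=
          lintegral_lintegral_Ioo_mul_swap hf.ennreal_ofReal hk.ennreal_ofReal ht U
      _ = ∫⁻ τ in Set.Ioi 0, ENNReal.ofReal (f τ * κ τ) :=
          setLIntegral_congr_fun measurableSet_Ioi fun τ hτ => by
            rw [hkκ τ hτ, ENNReal.ofReal_mul (hf0 τ hτ)]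
  · exact ae_restrict_of_forall_mem measurableSet_Ioi fun τ hτ =>
      mul_nonneg (hf0 τ hτ) (hκ0 τ hτ)
  · exact (hf.mul hκ.aemeasurable).aestronglyMeasurable
  · exact ae_restrict_of_forall_mem hU fun x hx => mul_nonneg (hS0 _ (htx x hx).le) (hk0 x hx)
  · exact (hSt.mul hk.aemeasurable).aestronglyMeasurable

theorem MonotoneOn.aemeasurable_div {s : ℝ → ℝ} (hs : MonotoneOn s (Set.Ici 0)) :
    AEMeasurable (fun τ => s τ / τ) (volume.restrict (Set.Ioi 0)) :=
  ((aemeasurable_restrict_of_monotoneOn measurableSet_Ici hs).mono_measure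
    (Measure.restrict_mono Set.Ioi_subset_Ici_self le_rfl)).div measurable_id.aemeasurable

theorem MonotoneOn.integrableOn_Ioc_div {s : ℝ → ℝ} (hs : MonotoneOn s (Set.Ici 0)) {x y : ℝ}
    (hx : 0 < x) (hint : IntegrableOn (fun τ => s τ / τ) (Set.Ioc 0 x)) :
    IntegrableOn (fun τ => s τ / τ) (Set.Ioc 0 y) := by
  rcases le_total y x with hyx | hxy
  · exact hint.mono_set (Set.Ioc_subset_Ioc_right hyx)
  rw [← Set.Ioc_union_Ioc_eq_Ioc hx.le hxy]
  refine hint.union (IntegrableOn.mono_set ?_ Set.Ioc_subset_Icc_self)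
  simp_rw [div_eq_mul_inv]
  exact ((hs.mono fun τ hτ => hx.le.trans hτ.1).integrableOn_isCompact
    isCompact_Icc).mul_continuousOn
    (continuousOn_inv₀.mono fun τ hτ => (hx.trans_le hτ.1).ne') isCompact_Icc

theorem MonotoneOn.eq_zero_of_integrableOn_div {s : ℝ → ℝ} (hs : MonotoneOn s (Set.Ici 0))
    (hs0 : 0 ≤ s 0) (hint : IntegrableOn (fun τ => s τ / τ) (Set.Ioc 0 1)) : s 0 = 0 := by
  by_contra hne
  have hinv : IntegrableOn (fun τ : ℝ => s 0 / τ) (Set.Ioc 0 1) := by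
    refine hint.mono' (measurable_const.div measurable_id).aestronglyMeasurable ?_
    filter_upwards [ae_restrict_mem measurableSet_Ioc] with τ hτ
    rw [Real.norm_of_nonneg (div_nonneg hs0 hτ.1.le)]
    exact div_le_div_of_nonneg_right (hs Set.self_mem_Ici hτ.1.le hτ.1.le) hτ.1.le
  have : IntervalIntegrable (fun τ : ℝ => τ⁻¹) volume 0 1 := by
    rw [intervalIntegrable_iff_integrableOn_Ioc_of_le zero_le_one]
    exact IntegrableOn.congr_fun (hinv.const_mul (s 0)⁻¹) (fun τ _ => by field_simp)
      measurableSet_Ioc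
  simp at this

theorem ofReal_intervalIntegral_div_eq_lintegral {s : ℝ → ℝ} (hs : MonotoneOn s (Set.Ici 0))
    (hs0 : ∀ τ ≥ 0, 0 ≤ s τ) (hint : IntegrableOn (fun τ => s τ / τ) (Set.Ioc 0 1)) {x : ℝ}
    (hx : 0 < x) :
    ENNReal.ofReal (∫ τ in (0 : ℝ)..x, s τ / τ)
      = ∫⁻ τ in Set.Ioo 0 x, ENNReal.ofReal (s τ / τ) := by
  rw [intervalIntegral.integral_of_le hx.le, integral_Ioc_eq_integral_Ioo,
    ofReal_integral_eq_lintegral_ofReal]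
  · exact (hs.integrableOn_Ioc_div one_pos hint).mono_set Set.Ioo_subset_Ioc_self
  · exact ae_restrict_of_forall_mem measurableSet_Ioo fun τ hτ =>
      div_nonneg (hs0 τ hτ.1.le) hτ.1.le

theorem MonotoneOn.intervalIntegral_div_eq_zero {s : ℝ → ℝ} (hs : MonotoneOn s (Set.Ici 0))
    (hint : ¬IntegrableOn (fun τ => s τ / τ) (Set.Ioc 0 1)) {x : ℝ} (hx : 0 < x) :
    ∫ τ in (0 : ℝ)..x, s τ / τ = 0 := by
  rw [intervalIntegral.integral_of_le hx.le]
  exact integral_undef fun h => hint (hs.integrableOn_Ioc_div hx h)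

/-- The function `h` of Conjecture 2 attached to `s`: `h (x ^ 2) = s x / (4 (n - 1))`
with `n = m + 2`. -/
noncomputable def transferProfile (m : ℕ) (s : ℝ → ℝ) (y : ℝ) : ℝ := s √y / (4 * (m + 1))

theorem transferProfile_nonneg {s : ℝ → ℝ} (m : ℕ) (hs0 : ∀ τ ≥ 0, 0 ≤ s τ) (y : ℝ) :
    0 ≤ transferProfile m s y :=
  div_nonneg (hs0 _ (sqrt_nonneg y)) (by positivity)

theorem transferProfile_monotoneOn {s : ℝ → ℝ} (m : ℕ) (hs : MonotoneOn s (Set.Ici 0)) :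
    MonotoneOn (transferProfile m s) (Set.Ici 0) := fun _ _ _ _ hxy =>
  div_le_div_of_nonneg_right (hs (sqrt_nonneg _) (sqrt_nonneg _) (sqrt_le_sqrt hxy))
    (by positivity)

theorem intervalIntegral_transferProfile_eq {S s : ℝ → ℝ} (m : ℕ) {t : ℝ} (ht : 0 < t)
    (hS : MonotoneOn S (Set.Ici 0)) (hS0 : ∀ x ≥ 0, 0 ≤ S x) (hs : MonotoneOn s (Set.Ici 0))
    (hs0 : ∀ τ ≥ 0, 0 ≤ s τ)
    (hSs : ∀ x > 0, ENNReal.ofReal (S x) = ∫⁻ τ in Set.Ioo 0 x, ENNReal.ofReal (s τ / τ)) :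
    ∫ x in (0 : ℝ)..1, transferProfile m s (t ^ 2 * x) / x * (1 - x) ^ (m + 1)
      = ∫ x in (0 : ℝ)..1, S (t * x) * (1 - x ^ 2) ^ m * x := by
  -- `κ τ = ∫_{τ/t}^1 (1 - x²)^m x dx`; the positive part makes it vanish for `τ ≥ t`.
  set κ : ℝ → ℝ := fun τ => max (1 - (τ / t) ^ 2) 0 ^ (m + 1) / (2 * (m + 1))
  set g : ℝ → ℝ := fun x => transferProfile m s (t ^ 2 * x) / x * max (1 - x) 0 ^ (m + 1)
  rw [intervalIntegral.integral_of_le zero_le_one, intervalIntegral.integral_of_le zero_le_one,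
    integral_Ioc_eq_integral_Ioo, integral_Ioc_eq_integral_Ioo]
  trans ∫ τ in Set.Ioi 0, s τ / τ * κ τ
  · calc ∫ x in Set.Ioo 0 1, transferProfile m s (t ^ 2 * x) / x * (1 - x) ^ (m + 1)
        = ∫ x in Set.Ioo 0 1, g x :=
          setIntegral_congr_fun measurableSet_Ioo fun x hx => by
            simp only [g, max_eq_left (sub_nonneg.2 hx.2.le)]
      _ = ∫ x in Set.Ioi 0, g x :=
          (setIntegral_eq_of_subset_of_forall_sdiff_eq_zero measurableSet_Ioi
            Set.Ioo_subset_Ioi_self fun x hx => by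
              have : 1 ≤ x := not_lt.1 fun h => hx.2 ⟨hx.1, h⟩
              simp [g, max_eq_right (sub_nonpos.2 this)]).symm
      _ = ∫ τ in Set.Ioi 0, 2 * τ / t ^ 2 * g ((τ / t) ^ 2) := setIntegral_Ioi_eq_comp_sq_div ht g
      _ = ∫ τ in Set.Ioi 0, s τ / τ * κ τ :=
          setIntegral_congr_fun measurableSet_Ioi fun τ hτ => by
            have hτ : 0 < τ := hτ
            have : √(t ^ 2 * (τ / t) ^ 2) = τ := by
              rw [← mul_pow, mul_div_cancel₀ _ ht.ne', sqrt_sq hτ.le]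
            simp only [g, κ, transferProfile, this]
            field_simp
            ring
  · symm
    simp_rw [mul_assoc]
    refine setIntegral_comp_mul_mul_eq ht measurableSet_Ioo Set.Ioo_subset_Ioi_self hS hS0
      hs.aemeasurable_div (fun τ hτ => div_nonneg (hs0 τ hτ.le) hτ.le) hSs (by fun_prop)
      (fun x hx => ?_) (by fun_prop) (fun τ _ => by positivity) fun τ hτ => ?_
    · have : 0 ≤ 1 - x ^ 2 := by nlinarith [hx.1, hx.2]
      exact mul_nonneg (pow_nonneg this m) hx.1.le
    · have hτt : 0 < τ / t := div_pos hτ ht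
      have : Set.Ioo 0 1 ∩ Set.Ioi (τ / t) = Set.Ioo (τ / t) 1 :=
        Set.ext fun x => ⟨fun h => ⟨h.2, h.1.2⟩, fun h => ⟨⟨hτt.trans h.1, h.2⟩, h.1⟩⟩
      rw [this]
      exact lintegral_Ioo_one_sub_sq_pow_mul m hτt.le

theorem intervalIntegral_transferProfile_le {S s : ℝ → ℝ} (m : ℕ) {a : ℝ} (ha : 0 < a)
    (hS : MonotoneOn S (Set.Ici 0)) (hS0 : ∀ x ≥ 0, 0 ≤ S x) (hs : MonotoneOn s (Set.Ici 0))
    (hs0 : ∀ τ ≥ 0, 0 ≤ s τ) (hs00 : s 0 = 0)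
    (hSs : ∀ x > 0, ENNReal.ofReal (S x) = ∫⁻ τ in Set.Ioo 0 x, ENNReal.ofReal (s τ / τ))
    (hprem : ∀ t ≥ (0 : ℝ), ∫ x in (0 : ℝ)..1, S (t * x) * (1 - x ^ 2) ^ m * x ≤ t ^ (2 * a))
    {T : ℝ} (hT : 0 ≤ T) :
    ∫ x in (0 : ℝ)..1, transferProfile m s (T * x) / x * (1 - x) ^ (m + 1) ≤ T ^ a := by
  rcases hT.eq_or_lt with rfl | hT
  · simp [transferProfile, hs00, zero_rpow ha.ne']
  obtain ⟨t, ht, rfl⟩ : ∃ t, 0 < t ∧ t ^ 2 = T := ⟨√T, sqrt_pos.2 hT, sq_sqrt hT.le⟩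
  rw [intervalIntegral_transferProfile_eq m ht hS hS0 hs hs0 hSs, ← rpow_natCast,
    ← rpow_mul ht.le]
  norm_num
  exact hprem t ht.le

theorem setIntegral_weight_eq_mul_transferProfile {S s : ℝ → ℝ} (m : ℕ) {a : ℝ} (ha : 0 < a)
    (hS : MonotoneOn S (Set.Ici 0)) (hS0 : ∀ x ≥ 0, 0 ≤ S x) (hs : MonotoneOn s (Set.Ici 0))
    (hs0 : ∀ τ ≥ 0, 0 ≤ s τ)
    (hSs : ∀ x > 0, ENNReal.ofReal (S x) = ∫⁻ τ in Set.Ioo 0 x, ENNReal.ofReal (s τ / τ)) :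
    ∫ t in Set.Ioi 0, S t * t ^ (2 * (2 * a) - 1) / (1 + t ^ (2 * (2 * a))) ^ 2
      = (m + 1) / (2 * a) *
          ∫ T in Set.Ioi 0, transferProfile m s T / T * (1 / (1 + T ^ (2 * a))) := by
  set p := 2 * (2 * a)
  have hp : 0 < p := by positivity
  calc ∫ t in Set.Ioi 0, S t * t ^ (p - 1) / (1 + t ^ p) ^ 2
      = ∫ t in Set.Ioi 0, S (1 * t) * (t ^ (p - 1) / (1 + t ^ p) ^ 2) := by
        simp only [one_mul, mul_div_assoc]
    _ = ∫ τ in Set.Ioi 0, s τ / τ * (1 / (p * (1 + τ ^ p))) := by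
        refine setIntegral_comp_mul_mul_eq one_pos measurableSet_Ioi subset_rfl hS hS0
          hs.aemeasurable_div (fun τ hτ => div_nonneg (hs0 τ hτ.le) hτ.le) hSs (by fun_prop)
          (fun x hx => ?_) (by fun_prop) (fun τ hτ => ?_) fun τ hτ => ?_
        · have : (0 : ℝ) < x := hx
          positivity
        · have : (0 : ℝ) < τ := hτ
          positivity
        · rw [div_one, Set.Ioi_inter_Ioi, sup_eq_right.2 hτ.le]
          exact lintegral_Ioi_rpow_div_one_add_rpow_sq hp hτ
    _ = (m + 1) / (2 * a) * ∫ τ in Set.Ioi 0,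
          2 * τ / 1 ^ 2 * (transferProfile m s ((τ / 1) ^ 2) / (τ / 1) ^ 2
            * (1 / (1 + ((τ / 1) ^ 2) ^ (2 * a)))) := by
        rw [← integral_const_mul]
        refine setIntegral_congr_fun measurableSet_Ioi fun τ hτ => ?_
        have hτ : 0 < τ := hτ
        have : (τ ^ 2) ^ (2 * a) = τ ^ p := by
          rw [← rpow_natCast, ← rpow_mul hτ.le]
          norm_num [p]
        simp only [transferProfile, div_one, sqrt_sq hτ.le, this]
        field_simp
        ring
    _ = _ := congrArg _ (setIntegral_Ioi_eq_comp_sq_div one_pos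
          fun T => transferProfile m s T / T * (1 / (1 + T ^ (2 * a)))).symm

theorem stmt_10 (n : ℕ) (hn : 2 ≤ n) (a : ℝ) (ha : 1/2 < a) (l : ℝ) (hl : l = 2 * a)
    (hconj2 : ∀ h : ℝ → ℝ,
      (∀ t ≥ (0:ℝ), 0 ≤ h t) →
      MonotoneOn h (Set.Ici 0) →
      (∀ t ≥ (0:ℝ), ∫ x in (0:ℝ)..1, (h (t * x) / x) * (1 - x) ^ (n - 1) ≤ t ^ a) →
      ∫ t in Set.Ioi (0:ℝ), (h t / t) * (1 / (1 + t ^ (2*a))) ≤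
        (Real.pi / 2) * ∏ k ∈ Finset.Icc 1 (n-1), (1 + a / (k:ℝ))) :
    ∀ S s : ℝ → ℝ,
      (∀ x ≥ (0:ℝ), 0 ≤ S x) →
      MonotoneOn S (Set.Ici 0) →
      ConvexOn ℝ Set.univ (fun x : ℝ => S (Real.exp x)) →
      S 0 = 0 →
      MonotoneOn s (Set.Ici 0) →
      (∀ t ≥ (0:ℝ), 0 ≤ s t) →
      (∀ x ≥ (0:ℝ), S x = ∫ τ in (0:ℝ)..x, s τ / τ) →
      (∀ t ≥ (0:ℝ), ∫ x in (0:ℝ)..1, S (t * x) * (1 - x^2) ^ (n - 2) * x ≤ t ^ l) →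
      ∫ t in Set.Ioi (0:ℝ), S t * t ^ (2*l - 1) / (1 + t ^ (2*l))^2 ≤
        (Real.pi * (n - 1) / (2 * l)) *
          ∏ k ∈ Finset.Icc 1 (n-1), (1 + l / (2 * (k:ℝ))) := by
  intro S s hS0 hS _ _ hs hs0 hSs hprem
  obtain ⟨m, rfl⟩ : ∃ m, n = m + 2 := ⟨n - 2, by omega⟩
  subst hl
  have ha0 : 0 < a := by linarith
  have hprod : ∏ k ∈ Finset.Icc 1 (m + 1), (1 + 2 * a / (2 * (k : ℝ)))
      = ∏ k ∈ Finset.Icc 1 (m + 1), (1 + a / (k : ℝ)) :=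
    Finset.prod_congr rfl fun k _ => by rw [mul_div_mul_left _ _ two_ne_zero]
  simp only [Nat.add_sub_cancel, show m + 2 - 1 = m + 1 from rfl, hprod] at hconj2 hprem ⊢
  rw [show ((m + 2 : ℕ) : ℝ) - 1 = m + 1 by push_cast; ring]
  by_cases hint : IntegrableOn (fun τ => s τ / τ) (Set.Ioc 0 1)
  · have hSs' : ∀ x > 0, ENNReal.ofReal (S x) = ∫⁻ τ in Set.Ioo 0 x, ENNReal.ofReal (s τ / τ) :=
      fun x hx => hSs x hx.le ▸ ofReal_intervalIntegral_div_eq_lintegral hs hs0 hint hx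
    have hs00 : s 0 = 0 := hs.eq_zero_of_integrableOn_div (hs0 0 le_rfl) hint
    have hJ := hconj2 (transferProfile m s) (fun _ _ => transferProfile_nonneg m hs0 _)
      (transferProfile_monotoneOn m hs) fun T hT =>
        intervalIntegral_transferProfile_le m ha0 hS hS0 hs hs0 hs00 hSs' hprem hT
    rw [setIntegral_weight_eq_mul_transferProfile m ha0 hS hS0 hs hs0 hSs']
    calc _ ≤ ((m : ℝ) + 1) / (2 * a) *
          (π / 2 * ∏ k ∈ Finset.Icc 1 (m + 1), (1 + a / (k : ℝ))) :=
          mul_le_mul_of_nonneg_left hJ (by positivity)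
      _ = _ := by ring
  · have hS_zero : ∀ x > 0, S x = 0 := fun x hx =>
      (hSs x hx.le).trans (hs.intervalIntegral_div_eq_zero hint hx)
    rw [setIntegral_eq_zero_of_forall_eq_zero fun t ht => by rw [hS_zero t ht, zero_mul, zero_div]]
    positivity
end

section
/- Conjecture 3 implies Conjecture 2 for continuously differentiable h: fix n ≥ 2 and α > 1/2, and suppose that for every nonnegative continuous q on [0,∞), the condition ∫₀¹ (∫ₓ¹ (1-y)^{n-1}/y dy) q(tx) dx ≤ t^{α-1} for all t > 0 implies ∫₀^∞ q(t) ln(1 + t^{-2α}) dt ≤ πα ∏_{k=1}^{n-1}(1+α/k). Then for every increasing continuously differentiable h ≥ 0 on [0,∞) with h(0)=0, the condition ∫₀¹ (h(tx)/x)(1-x)^{n-1} dx ≤ t^α for all t ≥ 0 implies ∫₀^∞ (h(t)/t) dt/(1+t^{2α}) ≤ (π/2) ∏_{k=1}^{n-1}(1+α/k). -/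
/-!
Put `q = h'`. Writing `h (t x) = t ∫₀ˣ q (t u) du` and exchanging the order of integration over
the triangle `0 < u ≤ x ≤ 1` gives
`∫₀¹ (h(tx)/x)(1-x)^(n-1) dx = t ∫₀¹ (∫ₓ¹ (1-y)^(n-1)/y dy) q(tx) dx`,
so the hypothesis on `h` is the hypothesis of the assumed implication for `q`. Likewise
`ln (1 + t^(-2α)) = ∫ₜ^∞ 2α ds / (s (1 + s^(2α)))`, and exchanging the order of integration over
`0 < t ≤ s` gives `∫₀^∞ q(t) ln(1 + t^(-2α)) dt = 2α ∫₀^∞ (h(s)/s) ds / (1 + s^(2α))`, so its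
conclusion is `2α` times the claimed bound.

All integrands are nonnegative, so both exchanges are done with Tonelli for lower Lebesgue
integrals; the Bochner identities follow without any integrability hypothesis, because a
nonnegative function has Bochner integral `toReal` of its lower integral (both sides are the junk
value `0` exactly when that is `∞`).
-/

open Real MeasureTheory Set Filter Topology
open scoped ENNReal

theorem lintegral_mul_setLIntegral_Iic_comm {μ : Measure ℝ} [SFinite μ] {f g : ℝ → ℝ≥0∞}
    (hf : Measurable f) (hg : Measurable g) :
    ∫⁻ x, f x * ∫⁻ u in Iic x, g u ∂μ ∂μ = ∫⁻ u, g u * ∫⁻ x in Ici u, f x ∂μ ∂μ := by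
  have hdiag : ∀ x u, f x * (Iic x).indicator g u = if u ≤ x then f x * g u else 0 := by
    intro x u; by_cases hux : u ≤ x <;> simp [indicator, hux]
  have hdiag' : ∀ x u, g u * (Ici u).indicator f x = if u ≤ x then f x * g u else 0 := by
    intro x u; by_cases hux : u ≤ x <;> simp [indicator, hux, mul_comm]
  have hm : Measurable fun p : ℝ × ℝ => if p.2 ≤ p.1 then f p.1 * g p.2 else 0 :=
    Measurable.ite (measurableSet_le measurable_snd measurable_fst)
      ((hf.comp measurable_fst).mul (hg.comp measurable_snd)) measurable_const
  simp_rw [← lintegral_indicator measurableSet_Iic, ← lintegral_indicator measurableSet_Ici,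
    ← lintegral_const_mul _ (hg.indicator measurableSet_Iic),
    ← lintegral_const_mul _ (hf.indicator measurableSet_Ici), hdiag, hdiag']
  exact lintegral_lintegral_swap hm.aemeasurable

theorem ofReal_sub_eq_setLIntegral_Ioc {F f : ℝ → ℝ} {a b : ℝ} (hab : a ≤ b)
    (hcont : ContinuousOn F (Icc a b)) (hderiv : ∀ x ∈ Ioo a b, HasDerivAt F (f x) x)
    (hf : ∀ x ∈ Ioo a b, 0 ≤ f x) :
    ENNReal.ofReal (F b - F a) = ∫⁻ x in Ioc a b, ENNReal.ofReal (f x) := by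
  have hint := intervalIntegral.integrableOn_deriv_of_nonneg hcont hderiv hf
  rw [← intervalIntegral.integral_eq_sub_of_hasDerivAt_of_le hab hcont hderiv
    ((intervalIntegrable_iff_integrableOn_Ioc_of_le hab).2 hint),
    intervalIntegral.integral_of_le hab, ← Measure.restrict_congr_set Ioo_ae_eq_Ioc]
  exact ofReal_integral_eq_lintegral_ofReal (hint.mono_set Ioo_subset_Ioc_self)
    ((ae_restrict_iff' measurableSet_Ioo).2 (ae_of_all _ hf))

theorem ofReal_sub_eq_setLIntegral_Ioi {F f : ℝ → ℝ} {a l : ℝ}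
    (hderiv : ∀ x ∈ Ici a, HasDerivAt F (f x) x) (hf : ∀ x ∈ Ioi a, 0 ≤ f x)
    (hF : Tendsto F atTop (𝓝 l)) :
    ENNReal.ofReal (l - F a) = ∫⁻ x in Ioi a, ENNReal.ofReal (f x) := by
  rw [← integral_Ioi_of_hasDerivAt_of_nonneg' hderiv hf hF]
  exact ofReal_integral_eq_lintegral_ofReal (integrableOn_Ioi_deriv_of_nonneg' hderiv hf hF)
    ((ae_restrict_iff' measurableSet_Ioi).2 (ae_of_all _ hf))

theorem hasDerivAt_neg_log_one_add_rpow_neg {b s : ℝ} (hs : 0 < s) :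
    HasDerivAt (fun u => -log (1 + u ^ (-b))) (b / (s * (1 + s ^ b))) s := by
  have hpow : HasDerivAt (fun u => 1 + u ^ (-b)) (-b * s ^ (-b - 1)) s :=
    (hasDerivAt_rpow_const (Or.inl hs.ne')).const_add 1
  refine ((hpow.log (by positivity)).neg).congr_deriv ?_
  have hsb : 0 < s ^ b := rpow_pos_of_pos hs b
  rw [rpow_sub hs, rpow_neg hs.le, rpow_one]
  field_simp
  ring

theorem ofReal_log_one_add_rpow_neg {b t : ℝ} (hb : 0 < b) (ht : 0 < t) :
    ENNReal.ofReal (log (1 + t ^ (-b))) =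
      ∫⁻ s in Ioi t, ENNReal.ofReal (b / (s * (1 + s ^ b))) := by
  have hlim : Tendsto (fun u => -log (1 + u ^ (-b))) atTop (𝓝 0) := by
    have hpow : Tendsto (fun u : ℝ => 1 + u ^ (-b)) atTop (𝓝 1) := by
      simpa using tendsto_const_nhds.add (tendsto_rpow_neg_atTop hb)
    simpa using ((continuousAt_log one_ne_zero).tendsto.comp hpow).neg
  have hnonneg : ∀ s ∈ Ioi t, 0 ≤ b / (s * (1 + s ^ b)) := fun s hs => by
    have hs : 0 < s := ht.trans hs
    have hsb : 0 < s ^ b := rpow_pos_of_pos hs b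
    positivity
  simpa using ofReal_sub_eq_setLIntegral_Ioi
    (fun s hs => hasDerivAt_neg_log_one_add_rpow_neg (ht.trans_le hs)) hnonneg hlim

theorem continuousOn_intervalIntegral_Ioi {g : ℝ → ℝ} {c b : ℝ} (hb : c < b)
    (hg : ContinuousOn g (Ioi c)) : ContinuousOn (fun x => ∫ y in x..b, g y) (Ioi c) := by
  intro x hx
  have hsub : uIcc x b ⊆ Ioi c := fun y hy => lt_of_lt_of_le (lt_min hx hb) hy.1
  exact (intervalIntegral.integral_hasDerivAt_left ((hg.mono hsub).intervalIntegrable)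
    (hg.stronglyMeasurableAtFilter isOpen_Ioi x hx)
    (hg.continuousAt (isOpen_Ioi.mem_nhds hx))).continuousAt.continuousWithinAt

theorem MonotoneOn.deriv_nonneg_of_mem_Ici {h : ℝ → ℝ} {a x : ℝ} (hmono : MonotoneOn h (Ici a))
    (hd : DifferentiableAt ℝ h x) (hx : a ≤ x) : 0 ≤ deriv h x :=
  hmono.derivWithin_nonneg.trans_eq (hd.derivWithin (uniqueDiffOn_Ici a x hx))

section MonotonePrimitive

variable {h : ℝ → ℝ}

theorem lintegral_comp_mul_div_mul_one_sub_pow (hd : Differentiable ℝ h)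
    (hmono : MonotoneOn h (Ici 0)) (h0 : h 0 = 0) (m : ℕ) {t : ℝ} (ht : 0 < t) :
    ∫⁻ x in Ioc 0 1, ENNReal.ofReal (h (t * x) / x * (1 - x) ^ m) =
      ENNReal.ofReal t *
        ∫⁻ x in Ioc 0 1, ENNReal.ofReal ((∫ y in x..1, (1 - y) ^ m / y) * deriv h (t * x)) := by
  have htq : ∀ u, 0 ≤ u → 0 ≤ t * deriv h (t * u) := fun u hu =>
    mul_nonneg ht.le (hmono.deriv_nonneg_of_mem_Ici (hd _) (mul_nonneg ht.le hu))
  have hprimitive : ∀ x ∈ Ioc (0 : ℝ) 1, ENNReal.ofReal (h (t * x) / x * (1 - x) ^ m) =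
      ENNReal.ofReal ((1 - x) ^ m / x) *
        ∫⁻ u in Iic x, ENNReal.ofReal (t * deriv h (t * u)) ∂volume.restrict (Ioc 0 1) := by
    intro x hx
    have hderiv : ∀ u, HasDerivAt (fun u => h (t * u)) (t * deriv h (t * u)) u := fun u => by
      have := (hd (t * u)).hasDerivAt.comp u ((hasDerivAt_id u).const_mul t)
      simpa [Function.comp_def, mul_comm] using this
    rw [Measure.restrict_restrict measurableSet_Iic, Iic_inter_Ioc_of_le hx.2,
      ← ofReal_sub_eq_setLIntegral_Ioc hx.1.le
        (fun u _ => (hderiv u).continuousAt.continuousWithinAt) (fun u _ => hderiv u)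
        (fun u hu => htq u hu.1.le), mul_zero, h0, sub_zero,
      ← ENNReal.ofReal_mul (div_nonneg (pow_nonneg (by linarith [hx.2]) _) hx.1.le)]
    congr 1
    ring
  have hkernel : ∀ u ∈ Ioc (0 : ℝ) 1,
      ∫⁻ x in Ici u, ENNReal.ofReal ((1 - x) ^ m / x) ∂volume.restrict (Ioc 0 1) =
        ENNReal.ofReal (∫ y in u..1, (1 - y) ^ m / y) := by
    intro u hu
    have hset : Ici u ∩ Ioc 0 1 = Icc u 1 := by
      ext x; simp only [mem_inter_iff, mem_Ici, mem_Ioc, mem_Icc]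
      constructor
      · rintro ⟨hux, -, hx1⟩; exact ⟨hux, hx1⟩
      · rintro ⟨hux, hx1⟩; exact ⟨hux, hu.1.trans_le hux, hx1⟩
    have hcont : ContinuousOn (fun y : ℝ => (1 - y) ^ m / y) (Icc u 1) :=
      (by fun_prop : Continuous fun y : ℝ => (1 - y) ^ m).continuousOn.div continuousOn_id
        fun y hy => (hu.1.trans_le hy.1).ne'
    rw [Measure.restrict_restrict measurableSet_Ici, hset, intervalIntegral.integral_of_le hu.2,
      ← Measure.restrict_congr_set Ioc_ae_eq_Icc]
    exact (ofReal_integral_eq_lintegral_ofReal (hcont.integrableOn_Icc.mono_set Ioc_subset_Icc_self)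
      ((ae_restrict_iff' measurableSet_Ioc).2 (ae_of_all _ fun y hy =>
        div_nonneg (pow_nonneg (by linarith [hy.2]) _) (hu.1.trans hy.1).le))).symm
  calc ∫⁻ x in Ioc 0 1, ENNReal.ofReal (h (t * x) / x * (1 - x) ^ m)
      = ∫⁻ x in Ioc 0 1, ENNReal.ofReal ((1 - x) ^ m / x) *
          ∫⁻ u in Iic x, ENNReal.ofReal (t * deriv h (t * u)) ∂volume.restrict (Ioc 0 1) :=
        setLIntegral_congr_fun measurableSet_Ioc hprimitive
    _ = ∫⁻ u in Ioc 0 1, ENNReal.ofReal (t * deriv h (t * u)) *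
          ∫⁻ x in Ici u, ENNReal.ofReal ((1 - x) ^ m / x) ∂volume.restrict (Ioc 0 1) :=
        lintegral_mul_setLIntegral_Iic_comm (by fun_prop) (by fun_prop)
    _ = ∫⁻ u in Ioc 0 1, ENNReal.ofReal t *
          ENNReal.ofReal ((∫ y in u..1, (1 - y) ^ m / y) * deriv h (t * u)) := by
        refine setLIntegral_congr_fun measurableSet_Ioc fun u hu => ?_
        rw [hkernel u hu, ← ENNReal.ofReal_mul (htq u hu.1.le), ← ENNReal.ofReal_mul ht.le]
        congr 1
        ring
    _ = _ := lintegral_const_mul' _ _ ENNReal.ofReal_ne_top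

theorem lintegral_deriv_mul_log_one_add_rpow_neg (hd : Differentiable ℝ h)
    (hmono : MonotoneOn h (Ici 0)) (h0 : h 0 = 0) {b : ℝ} (hb : 0 < b) :
    ∫⁻ t in Ioi 0, ENNReal.ofReal (deriv h t * log (1 + t ^ (-b))) =
      ENNReal.ofReal b * ∫⁻ s in Ioi 0, ENNReal.ofReal (h s / s * (1 / (1 + s ^ b))) := by
  have hq0 : ∀ t, 0 ≤ t → 0 ≤ deriv h t := fun t ht => hmono.deriv_nonneg_of_mem_Ici (hd t) ht
  have hlog : ∀ t ∈ Ioi (0 : ℝ), ENNReal.ofReal (deriv h t * log (1 + t ^ (-b))) =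
      ENNReal.ofReal (deriv h t) *
        ∫⁻ s in Ici t, ENNReal.ofReal (b / (s * (1 + s ^ b))) ∂volume.restrict (Ioi 0) := by
    intro t ht
    rw [Measure.restrict_restrict measurableSet_Ici,
      inter_eq_left.2 (Ici_subset_Ioi.2 ht), ← Measure.restrict_congr_set Ioi_ae_eq_Ici,
      ← ofReal_log_one_add_rpow_neg hb ht, ENNReal.ofReal_mul (hq0 t ht.le)]
  have hprimitive : ∀ s ∈ Ioi (0 : ℝ),
      ∫⁻ t in Iic s, ENNReal.ofReal (deriv h t) ∂volume.restrict (Ioi 0) =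
        ENNReal.ofReal (h s) := by
    intro s hs
    rw [Measure.restrict_restrict measurableSet_Iic, inter_comm, Ioi_inter_Iic,
      ← ofReal_sub_eq_setLIntegral_Ioc (le_of_lt hs) (hd.continuous.continuousOn)
        (fun u _ => (hd u).hasDerivAt) (fun u hu => hq0 u hu.1.le), h0, sub_zero]
  calc ∫⁻ t in Ioi 0, ENNReal.ofReal (deriv h t * log (1 + t ^ (-b)))
      = ∫⁻ t in Ioi 0, ENNReal.ofReal (deriv h t) *
          ∫⁻ s in Ici t, ENNReal.ofReal (b / (s * (1 + s ^ b))) ∂volume.restrict (Ioi 0) :=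
        setLIntegral_congr_fun measurableSet_Ioi hlog
    _ = ∫⁻ s in Ioi 0, ENNReal.ofReal (b / (s * (1 + s ^ b))) *
          ∫⁻ t in Iic s, ENNReal.ofReal (deriv h t) ∂volume.restrict (Ioi 0) :=
        (lintegral_mul_setLIntegral_Iic_comm (by fun_prop) (by fun_prop)).symm
    _ = ∫⁻ s in Ioi 0, ENNReal.ofReal b * ENNReal.ofReal (h s / s * (1 / (1 + s ^ b))) := by
        refine setLIntegral_congr_fun measurableSet_Ioi fun s hs => ?_
        have hsb : 0 < s ^ b := rpow_pos_of_pos hs b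
        have hs0 : 0 < s := hs
        rw [hprimitive s hs, ← ENNReal.ofReal_mul (by positivity), ← ENNReal.ofReal_mul hb.le]
        congr 1
        field_simp
    _ = _ := lintegral_const_mul' _ _ ENNReal.ofReal_ne_top

theorem integral_comp_mul_div_mul_one_sub_pow (hd : Differentiable ℝ h)
    (hmono : MonotoneOn h (Ici 0)) (h0 : h 0 = 0) (m : ℕ) {t : ℝ} (ht : 0 < t) :
    ∫ x in (0 : ℝ)..1, h (t * x) / x * (1 - x) ^ m =
      t * ∫ x in (0 : ℝ)..1, (∫ y in x..1, (1 - y) ^ m / y) * deriv h (t * x) := by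
  have hkernel : ContinuousOn (fun x => ∫ y in x..1, (1 - y) ^ m / y) (Ioi 0) :=
    continuousOn_intervalIntegral_Ioi zero_lt_one
      ((by fun_prop : Continuous fun y : ℝ => (1 - y) ^ m).continuousOn.div continuousOn_id
        fun y hy => ne_of_gt hy)
  have hm : AEStronglyMeasurable (fun x => (∫ y in x..1, (1 - y) ^ m / y) * deriv h (t * x))
      (volume.restrict (Ioc 0 1)) :=
    ((hkernel.mono Ioc_subset_Ioi_self).aestronglyMeasurable measurableSet_Ioc).mul
      (by fun_prop : Measurable fun x => deriv h (t * x)).aestronglyMeasurable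
  have hk0 : 0 ≤ᵐ[volume.restrict (Ioc 0 1)]
      fun x => (∫ y in x..1, (1 - y) ^ m / y) * deriv h (t * x) := by
    refine (ae_restrict_iff' measurableSet_Ioc).2 (ae_of_all _ fun x hx => mul_nonneg ?_
      (hmono.deriv_nonneg_of_mem_Ici (hd _) (mul_nonneg ht.le hx.1.le)))
    exact intervalIntegral.integral_nonneg hx.2 fun y hy =>
      div_nonneg (pow_nonneg (by linarith [hy.2]) _) (hx.1.trans_le hy.1).le
  have hr0 : 0 ≤ᵐ[volume.restrict (Ioc 0 1)] fun x => h (t * x) / x * (1 - x) ^ m := by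
    refine (ae_restrict_iff' measurableSet_Ioc).2 (ae_of_all _ fun x hx => ?_)
    have htx : 0 ≤ h (t * x) := h0 ▸ hmono self_mem_Ici (mul_nonneg ht.le hx.1.le)
      (mul_nonneg ht.le hx.1.le)
    exact mul_nonneg (div_nonneg htx hx.1.le) (pow_nonneg (by linarith [hx.2]) _)
  have hhm : Measurable h := hd.continuous.measurable
  rw [intervalIntegral.integral_of_le zero_le_one, intervalIntegral.integral_of_le zero_le_one,
    integral_eq_lintegral_of_nonneg_ae hr0 (by fun_prop : Measurable _).aestronglyMeasurable,
    integral_eq_lintegral_of_nonneg_ae hk0 hm,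
    lintegral_comp_mul_div_mul_one_sub_pow hd hmono h0 m ht, ENNReal.toReal_mul, ENNReal.toReal_ofReal ht.le]

theorem integral_deriv_mul_log_one_add_rpow_neg (hd : Differentiable ℝ h)
    (hmono : MonotoneOn h (Ici 0)) (h0 : h 0 = 0) {b : ℝ} (hb : 0 < b) :
    ∫ t in Ioi 0, deriv h t * log (1 + t ^ (-b)) =
      b * ∫ s in Ioi 0, h s / s * (1 / (1 + s ^ b)) := by
  have hlog0 : 0 ≤ᵐ[volume.restrict (Ioi 0)] fun t => deriv h t * log (1 + t ^ (-b)) := by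
    refine (ae_restrict_iff' measurableSet_Ioi).2 (ae_of_all _ fun t ht => mul_nonneg
      (hmono.deriv_nonneg_of_mem_Ici (hd t) (le_of_lt ht)) (log_nonneg ?_))
    linarith [rpow_nonneg (le_of_lt ht) (-b)]
  have hf0 : 0 ≤ᵐ[volume.restrict (Ioi 0)] fun s => h s / s * (1 / (1 + s ^ b)) := by
    refine (ae_restrict_iff' measurableSet_Ioi).2 (ae_of_all _ fun s (hs : 0 < s) => ?_)
    have hhs : 0 ≤ h s := h0 ▸ hmono self_mem_Ici hs.le hs.le
    have hsb : 0 < s ^ b := rpow_pos_of_pos hs b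
    positivity
  have hhm : Measurable h := hd.continuous.measurable
  rw [integral_eq_lintegral_of_nonneg_ae hlog0 (by fun_prop : Measurable _).aestronglyMeasurable,
    integral_eq_lintegral_of_nonneg_ae hf0 (by fun_prop : Measurable _).aestronglyMeasurable,
    lintegral_deriv_mul_log_one_add_rpow_neg hd hmono h0 hb, ENNReal.toReal_mul,
    ENNReal.toReal_ofReal hb.le]

end MonotonePrimitive

theorem stmt_11_general (n : ℕ) (a : ℝ) (ha : 1/2 < a)
    (hconj3 : ∀ q : ℝ → ℝ,
      (∀ t ≥ (0:ℝ), 0 ≤ q t) →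
      ContinuousOn q (Set.Ici 0) →
      (∀ t > (0:ℝ),
        ∫ x in (0:ℝ)..1, (∫ y in x..(1:ℝ), (1 - y) ^ (n - 1) / y) * q (t * x) ≤
          t ^ (a - 1)) →
      ∫ t in Set.Ioi (0:ℝ), q t * Real.log (1 + t ^ (-(2*a))) ≤
        Real.pi * a * ∏ k ∈ Finset.Icc 1 (n-1), (1 + a / (k:ℝ))) :
    ∀ h : ℝ → ℝ,
      MonotoneOn h (Set.Ici 0) →
      ContDiff ℝ 1 h →
      (∀ t ≥ (0:ℝ), 0 ≤ h t) →
      h 0 = 0 →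
      (∀ t ≥ (0:ℝ), ∫ x in (0:ℝ)..1, (h (t * x) / x) * (1 - x) ^ (n - 1) ≤ t ^ a) →
      ∫ t in Set.Ioi (0:ℝ), (h t / t) * (1 / (1 + t ^ (2*a))) ≤
        (Real.pi / 2) * ∏ k ∈ Finset.Icc 1 (n-1), (1 + a / (k:ℝ)) := by
  intro h hmono hC _ h0 hbound
  have ha0 : 0 < a := by linarith
  have hd : Differentiable ℝ h := hC.differentiable one_ne_zero
  have hrescaled : ∀ t > (0:ℝ),
      ∫ x in (0:ℝ)..1, (∫ y in x..(1:ℝ), (1 - y) ^ (n - 1) / y) * deriv h (t * x) ≤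
        t ^ (a - 1) := by
    intro t ht
    have hscaled := integral_comp_mul_div_mul_one_sub_pow hd hmono h0 (n - 1) ht ▸
      hbound t ht.le
    rwa [rpow_sub_one ht.ne', le_div_iff₀ ht, mul_comm]
  have hconj := hconj3 (deriv h) (fun t ht => hmono.deriv_nonneg_of_mem_Ici (hd t) ht)
    (hC.continuous_deriv le_rfl).continuousOn hrescaled
  rw [integral_deriv_mul_log_one_add_rpow_neg hd hmono h0 (by linarith : 0 < 2 * a)] at hconj
  nlinarith

theorem stmt_11 (n : ℕ) (hn : 2 ≤ n) (a : ℝ) (ha : 1/2 < a)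
    (hconj3 : ∀ q : ℝ → ℝ,
      (∀ t ≥ (0:ℝ), 0 ≤ q t) →
      ContinuousOn q (Set.Ici 0) →
      (∀ t > (0:ℝ),
        ∫ x in (0:ℝ)..1, (∫ y in x..(1:ℝ), (1 - y) ^ (n - 1) / y) * q (t * x) ≤
          t ^ (a - 1)) →
      ∫ t in Set.Ioi (0:ℝ), q t * Real.log (1 + t ^ (-(2*a))) ≤
        Real.pi * a * ∏ k ∈ Finset.Icc 1 (n-1), (1 + a / (k:ℝ))) :
    ∀ h : ℝ → ℝ,
      MonotoneOn h (Set.Ici 0) →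
      ContDiff ℝ 1 h →
      (∀ t ≥ (0:ℝ), 0 ≤ h t) →
      h 0 = 0 →
      (∀ t ≥ (0:ℝ), ∫ x in (0:ℝ)..1, (h (t * x) / x) * (1 - x) ^ (n - 1) ≤ t ^ a) →
      ∫ t in Set.Ioi (0:ℝ), (h t / t) * (1 / (1 + t ^ (2*a))) ≤
        (Real.pi / 2) * ∏ k ∈ Finset.Icc 1 (n-1), (1 + a / (k:ℝ)) :=
  stmt_11_general n a ha hconj3
end
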